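/- arXiv:1903.04552 — 2 statements merged into one kernel-verified Lean document; each statement's English description precedes it below -/
import Mathlib

section
/- Fix integers K ≥ 2, d ≥ 1, a real η with 0 < η < 1, and set ρ = (1−η)/(K−1). For each class k' ∈ {1,…,K}, let X_{k',1},…,X_{k',d} be {1,…,K}-valued random variables with P(X_{k',i} = k') = η and P(X_{k',i} = j) = ρ for j ≠ k', all Kd variables being mutually independent, and let c_{k',j} = #{i : X_{k',i} = j}. For a bijection g of {1,…,K}, define the assignment score L_g = ∑_{k=1}^{K} c_{g(k),k}. Then the probability that the identity is the unique bijection maximizing L_g (i.e., L_g < L_{id} for every bijection g ≠ id) is at least Pl^K, where Pl = P(c_{1,1} > c_{1,j} for all j ≠ 1) is the per-class strict-majority probability. -/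
open Finset MeasureTheory ProbabilityTheory

/-!
If every class `k` puts a strict majority of its examples into cluster `k`, the identity beats
every other bijection `g`: writing `∑ k, c k k = ∑ k, c (g k) (g k)`, each term `c (g k) k` is
at most `c (g k) (g k)`, strictly so wherever `g k ≠ k`. These `K` per-class events are read off
disjoint rows of the independent family `X`, hence are independent; and relabelling by the
transposition of `k` and `0` carries the law of row `k` to that of row `0`, since the labelling
distribution only depends on whether a label is correct. So each event has probability `Pl`.
-/

def IsStrictMode {κ α : Type*} [Fintype κ] [DecidableEq α] (a : α) (h : κ → α) : Prop :=
  ∀ b, b ≠ a → #{i | h i = b} < #{i | h i = a}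

lemma isStrictMode_comp_equiv {κ α β : Type*} [Fintype κ] [DecidableEq α] [DecidableEq β]
    (σ : α ≃ β) (a : α) (h : κ → α) :
    IsStrictMode (σ a) (σ ∘ h) ↔ IsStrictMode a h := by
  have hcount (b : β) : #{i | σ (h i) = b} = #{i | h i = σ.symm b} := by
    simp_rw [← Equiv.eq_symm_apply]
  simp only [IsStrictMode, Function.comp_apply, hcount, Equiv.symm_apply_apply]
  exact (σ.forall_congr fun b ↦ by rw [σ.injective.ne_iff, σ.symm_apply_apply]).symm

lemma sum_perm_lt_sum_diag {ι M : Type*} [Fintype ι] [AddCommMonoid M] [PartialOrder M]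
    [IsOrderedCancelAddMonoid M] {c : ι → ι → M} (hc : ∀ k j, j ≠ k → c k j < c k k)
    {g : Equiv.Perm ι} (hg : g ≠ 1) : ∑ k, c (g k) k < ∑ k, c k k := by
  obtain ⟨k, hk⟩ : ∃ k, g k ≠ k := by
    contrapose! hg
    exact Equiv.ext hg
  rw [← Equiv.sum_comp g fun k ↦ c k k]
  refine Finset.sum_lt_sum (fun j _ ↦ ?_) ⟨k, mem_univ k, hc _ _ (Ne.symm hk)⟩
  rcases eq_or_ne (g j) j with h | h
  · rw [h]
  · exact (hc _ _ (Ne.symm h)).le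

section

variable {Ω : Type*} [MeasurableSpace Ω] {P : Measure Ω}

namespace ProbabilityTheory

lemma iIndepFun.curry {ι κ β : Type*} [MeasurableSpace β] {X : ι × κ → Ω → β}
    (hX : ∀ p, Measurable (X p)) (h : iIndepFun X P) :
    iIndepFun (fun i ω j ↦ X (i, j) ω) P := by
  have := h.isProbabilityMeasure
  have (p : ι × κ) : IsProbabilityMeasure (P.map (X p)) :=
    Measure.isProbabilityMeasure_map (hX p).aemeasurable
  have hrow (i : ι) :
      P.map (fun ω j ↦ X (i, j) ω) = Measure.infinitePi fun j ↦ P.map (X (i, j)) :=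
    (h.precomp (Prod.mk_right_injective i)).map_fun_eq_infinitePi_map fun j ↦ hX (i, j)
  rw [iIndepFun_iff_map_fun_eq_infinitePi_map fun i ↦ measurable_pi_lambda _ fun j ↦ hX (i, j)]
  calc P.map (fun ω i j ↦ X (i, j) ω)
      = (P.map fun ω p ↦ X p ω).map (MeasurableEquiv.curry ι κ β) := by
        rw [Measure.map_map (by fun_prop) (measurable_pi_lambda _ hX)]; rfl
    _ = Measure.infinitePi fun i ↦ Measure.infinitePi fun j ↦ P.map (X (i, j)) := by
        rw [h.map_fun_eq_infinitePi_map hX,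
          Measure.infinitePi_map_curry fun i j ↦ P.map (X (i, j))]
    _ = Measure.infinitePi fun i ↦ P.map (fun ω j ↦ X (i, j) ω) := by simp_rw [hrow]

lemma identDistrib_of_measure_preimage_singleton {Ω' β : Type*} [MeasurableSpace Ω']
    [MeasurableSpace β] [Countable β] [MeasurableSingletonClass β] {ν : Measure Ω'}
    {f : Ω → β} {g : Ω' → β} (hf : Measurable f) (hg : Measurable g)
    (h : ∀ b, P (f ⁻¹' {b}) = ν (g ⁻¹' {b})) : IdentDistrib f g P ν where
  aemeasurable_fst := hf.aemeasurable
  aemeasurable_snd := hg.aemeasurable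
  map_eq := Measure.ext_of_singleton fun b ↦ by
    rw [Measure.map_apply hf (measurableSet_singleton b),
      Measure.map_apply hg (measurableSet_singleton b), h]

end ProbabilityTheory

lemma measure_isStrictMode_eq_of_equiv {ι α β : Type*} [Fintype ι]
    [DecidableEq α] [Countable α] [MeasurableSpace α] [MeasurableSingletonClass α]
    [DecidableEq β] [Countable β] [MeasurableSpace β] [MeasurableSingletonClass β]
    {Y : ι → Ω → α} {Z : ι → Ω → β}
    (hY : ∀ i, Measurable (Y i)) (hZ : ∀ i, Measurable (Z i))
    (hYind : iIndepFun Y P) (hZind : iIndepFun Z P) (σ : α ≃ β)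
    (hlaw : ∀ i a, P (Y i ⁻¹' {a}) = P (Z i ⁻¹' {σ a})) (a : α) :
    P {ω | IsStrictMode a (Y · ω)} = P {ω | IsStrictMode (σ a) (Z · ω)} := by
  have hident : IdentDistrib (fun ω i ↦ σ (Y i ω)) (fun ω i ↦ Z i ω) P P := by
    refine IdentDistrib.pi (fun i ↦ identDistrib_of_measure_preimage_singleton
      ((measurable_of_countable σ).comp (hY i)) (hZ i) fun b ↦ ?_)
      (hYind.comp _ fun _ ↦ measurable_of_countable σ) hZind
    simpa [Set.preimage, Equiv.eq_symm_apply] using hlaw i (σ.symm b)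
  calc P {ω | IsStrictMode a (Y · ω)}
      = P ((fun ω i ↦ σ (Y i ω)) ⁻¹' {h | IsStrictMode (σ a) h}) := by
        congr 1; ext ω; exact (isStrictMode_comp_equiv σ a _).symm
    _ = P {ω | IsStrictMode (σ a) (Z · ω)} :=
        hident.measure_mem_eq (Set.to_countable _).measurableSet

end

/-- Paper's Theorem 1 (first part): the probability that the identity is the unique
bijection maximizing the assignment score `L_g = ∑ k, c (g k) k` is at least `Pl ^ K`,
where `Pl` is the per-class strict-majority probability. -/
theorem identity_unique_argmax_prob_ge_pow
    (K d : ℕ) (hK : 2 ≤ K)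
    (η : ℝ) (ρ : ℝ)
    {Ω : Type} [MeasurableSpace Ω] (P : Measure Ω)
    (X : Fin K × Fin d → Ω → Fin K)
    (hmeas : ∀ p, Measurable (X p))
    (hindep : iIndepFun X P)
    (hdist : ∀ (k' : Fin K) (i : Fin d) (j : Fin K),
      P {ω | X (k', i) ω = j} = ENNReal.ofReal (if j = k' then η else ρ))
    (c : Fin K → Fin K → Ω → ℕ)
    (hc : ∀ k' j ω, c k' j ω = (univ.filter (fun i => X (k', i) ω = j)).card)
    (L : Equiv.Perm (Fin K) → Ω → ℕ)
    (hL : ∀ g ω, L g ω = ∑ k, c (g k) k ω)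
    (Pl : ENNReal)
    (hPl : Pl = P {ω | ∀ j, j ≠ (⟨0, by omega⟩ : Fin K) →
        c ⟨0, by omega⟩ j ω < c ⟨0, by omega⟩ ⟨0, by omega⟩ ω}) :
    P {ω | ∀ g : Equiv.Perm (Fin K), g ≠ 1 → L g ω < L 1 ω} ≥ Pl ^ K := by
  set z : Fin K := ⟨0, by omega⟩
  let A (k : Fin K) : Set Ω := {ω | IsStrictMode k fun i ↦ X (k, i) ω}
  have hA (k : Fin K) : A k = {ω | ∀ j, j ≠ k → c k j ω < c k k ω} := by
    simp only [A, IsStrictMode, hc]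
  have hrow (k : Fin K) : iIndepFun (fun i ↦ X (k, i)) P :=
    hindep.precomp (Prod.mk_right_injective k)
  have hclass (k : Fin K) : P (A k) = Pl := by
    have hlaw (i : Fin d) (b : Fin K) :
        P (X (k, i) ⁻¹' {b}) = P (X (z, i) ⁻¹' {Equiv.swap k z b}) := by
      simp only [Set.preimage, Set.mem_singleton_iff, hdist, Equiv.swap_apply_eq_iff,
        Equiv.swap_apply_right]
    rw [measure_isStrictMode_eq_of_equiv (fun i ↦ hmeas (k, i)) (fun i ↦ hmeas (z, i)) (hrow k)
      (hrow z) (Equiv.swap k z) hlaw k, Equiv.swap_apply_left, hPl, ← hA]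
  calc Pl ^ K = ∏ k, P (A k) := by simp [hclass]
    _ = P (⋂ k, A k) :=
      ((hindep.curry hmeas).meas_iInter fun k ↦
        ⟨{h | IsStrictMode k h}, (Set.to_countable _).measurableSet, rfl⟩).symm
    _ ≤ P {ω | ∀ g : Equiv.Perm (Fin K), g ≠ 1 → L g ω < L 1 ω} := by
      refine measure_mono fun ω hω g hg ↦ ?_
      simp only [Set.mem_iInter, hA, Set.mem_ofPred_eq] at hω
      simpa only [hL, Equiv.Perm.one_apply] using
        sum_perm_lt_sum_diag (c := fun k j ↦ c k j ω) hω hg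
end

section
/- Fix integers K ≥ 2, d ≥ 1, a real η with 0 ≤ η ≤ 1, set ρ = (1−η)/(K−1), and fix k ∈ {1,…,K}. Let X_1,…,X_d be independent {1,…,K}-valued random variables with P(X_i = k) = η and P(X_i = j) = ρ for j ≠ k, and let c_j = #{i : X_i = j}. Then P(c_k > c_j for all j ≠ k) = d! · ∑_{a=0}^{d} (η^a / a!) · T(K−1, d−a, a), where T(m, D, a) = ∑ ∏_{l=1}^{m} ρ^{e_l} / e_l!, the sum ranging over all (e_1,…,e_m) ∈ ℕ^m with ∑_l e_l = D and e_l < a for every l. -/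
/-!
Group the outcomes by the tuple `f = (X₁ ω, …, X_d ω)`. By independence a tuple with count vector
`c` has probability `η ^ c k * ρ ^ (d - c k)`, and exactly `d! / ∏ⱼ cⱼ!` tuples share it.
The event is therefore a sum over count vectors with `c k` strictly largest, which splits into
the value `a = c k` and the remaining `K - 1` counts, each below `a`.
-/

open Finset MeasureTheory ProbabilityTheory

/-- `T ρ a m D = ∑ ∏_{l} ρ ^ e l / (e l)!`, the sum ranging over all tuples
`e : Fin m → ℕ` with `∑ l, e l = D` and `e l < a` for every `l`. -/
noncomputable def T (ρ : ℝ) (a : ℕ) (m D : ℕ) : ℝ :=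
  ∑ e ∈ (Finset.Nat.antidiagonalTuple m D).filter (fun e => ∀ l, e l < a),
    ∏ l, ρ ^ e l / ((e l).factorial : ℝ)

open Nat

section FiberCard

variable {α β : Type*} [Fintype α] [DecidableEq β]

def fiberCard (f : α → β) (b : β) : ℕ := #{a | f a = b}

lemma sum_fiberCard [Fintype β] (f : α → β) : ∑ b, fiberCard f b = Fintype.card α := by
  simp only [fiberCard]
  rw [← card_eq_sum_card_fiberwise fun a _ => mem_univ (f a), Finset.card_univ]

lemma prod_comp_eq_prod_pow_fiberCard [Fintype β] {M : Type*} [CommMonoid M] (p : β → M)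
    (f : α → β) : ∏ a, p (f a) = ∏ b, p b ^ fiberCard f b := by
  simp only [fiberCard, ← prod_const]
  exact (prod_fiberwise_of_maps_to' (fun a _ => mem_univ (f a)) _).symm

lemma fiberCard_cons {d : ℕ} (x : β) (f : Fin d → β) :
    fiberCard (Fin.cons x f : Fin (d + 1) → β) = fiberCard f + Pi.single x 1 := by
  ext b
  simp only [fiberCard, Pi.add_apply, card_filter, Fin.sum_univ_succ, Fin.cons_zero,
    Fin.cons_succ, Pi.single_apply]
  simp_rw [eq_comm (a := x)]
  ring

end FiberCard

lemma card_filter_fin_succ {β : Type*} [Fintype β] {d : ℕ} (p : (Fin (d + 1) → β) → Prop)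
    [DecidablePred p] : #{g | p g} = ∑ x, #{f : Fin d → β | p (Fin.cons x f)} := by
  simp only [card_filter]
  rw [← (Fin.consEquiv fun _ => β).sum_comp, Fintype.sum_prod_type]
  rfl

lemma prod_factorial_add_single {β : Type*} [Fintype β] [DecidableEq β] (e : β → ℕ) (x : β) :
    ∏ b, (e b + (Pi.single x 1 : β → ℕ) b)! = (e x + 1) * ∏ b, (e b)! := by
  rw [← mul_prod_erase _ _ (mem_univ x), ← mul_prod_erase _ (fun b => (e b)!) (mem_univ x),
    prod_congr rfl fun b hb => by rw [Pi.single_eq_of_ne (ne_of_mem_erase hb), add_zero]]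
  simp only [Pi.single_eq_same, factorial_succ, mul_assoc]

lemma exists_eq_add_single_of_pos {β : Type*} [DecidableEq β] {e : β → ℕ} {x : β}
    (hx : 0 < e x) : ∃ e' : β → ℕ, e = e' + Pi.single x 1 :=
  ⟨e - Pi.single x 1, funext fun b => by
    rcases eq_or_ne b x with rfl | hb
    · simp only [Pi.add_apply, Pi.sub_apply, Pi.single_eq_same]
      omega
    · simp [hb]⟩

lemma prod_factorial_mul_card_fiberCard_eq {β : Type*} [Fintype β] [DecidableEq β] :
    ∀ {d : ℕ} (e : β → ℕ), ∑ b, e b = d → (∏ b, (e b)!) * #{f : Fin d → β | fiberCard f = e} = d !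
  | 0, e, he => by
    obtain rfl : e = 0 := funext fun b => sum_eq_zero_iff.1 he b (mem_univ b)
    rw [filter_true_of_mem fun f _ => funext fun b => by simp [fiberCard]]
    simp
  | d + 1, e, he => by
    rw [card_filter_fin_succ, mul_sum]
    simp only [fiberCard_cons]
    calc ∑ x, (∏ b, (e b)!) * #{f : Fin d → β | fiberCard f + Pi.single x 1 = e}
        = ∑ x, e x * d ! := sum_congr rfl fun x _ => ?_
      _ = (d + 1)! := by rw [← sum_mul, he, factorial_succ]
    rcases (e x).eq_zero_or_pos with hx | hx
    · rw [hx, zero_mul, filter_false_of_mem, card_empty, mul_zero]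
      intro f _ hf
      simpa [hx] using congrFun hf x
    · obtain ⟨e, rfl⟩ := exists_eq_add_single_of_pos hx
      have he' : ∑ b, e b = d := by simpa [sum_add_distrib] using he
      simp only [add_left_inj, Pi.add_apply, prod_factorial_add_single, Pi.single_eq_same,
        mul_assoc, prod_factorial_mul_card_fiberCard_eq e he']

lemma sum_prod_filter_fiberCard_eq {𝕜 β : Type*} [Field 𝕜] [CharZero 𝕜] [Fintype β]
    [DecidableEq β] {d : ℕ} (p : β → 𝕜) (Q : (β → ℕ) → Prop) [DecidablePred Q] :
    ∑ f : Fin d → β with Q (fiberCard f), ∏ i, p (f i)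
      = d ! * ∑ e ∈ piAntidiag (univ : Finset β) d with Q e, ∏ b, p b ^ e b / (e b)! := by
  have hmaps : ∀ f ∈ ({f | Q (fiberCard f)} : Finset (Fin d → β)),
      fiberCard f ∈ {e ∈ piAntidiag (univ : Finset β) d | Q e} := fun f hf => by
    simpa [sum_fiberCard] using hf
  rw [← sum_fiberwise_of_maps_to hmaps, mul_sum]
  refine sum_congr rfl fun e he => ?_
  obtain ⟨hsum, hQ⟩ : ∑ b, e b = d ∧ Q e := by simpa using he
  have hfiber : ∀ f : Fin d → β, Q (fiberCard f) ∧ fiberCard f = e ↔ fiberCard f = e :=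
    fun f => and_iff_right_of_imp fun hf => hf ▸ hQ
  have hcount : (∏ b, ((e b)! : 𝕜)) * #{f : Fin d → β | fiberCard f = e} = d ! := by
    exact_mod_cast prod_factorial_mul_card_fiberCard_eq e hsum
  rw [filter_filter, filter_congr fun f _ => hfiber f,
    sum_congr rfl fun f hf => by rw [prod_comp_eq_prod_pow_fiberCard, (mem_filter.1 hf).2],
    sum_const, nsmul_eq_mul, prod_div_distrib, ← hcount]
  have hfact : (∏ b, ((e b)! : 𝕜)) ≠ 0 :=
    prod_ne_zero_iff.2 fun b _ => Nat.cast_ne_zero.2 (factorial_ne_zero _)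
  field_simp

lemma sum_antidiagonalTuple_eq_sum_insertNth {M : Type*} [AddCommMonoid M] {m : ℕ}
    (k : Fin (m + 1)) (d : ℕ) (g : (Fin (m + 1) → ℕ) → M) :
    ∑ e ∈ Nat.antidiagonalTuple (m + 1) d, g e
      = ∑ a ∈ range (d + 1), ∑ e ∈ Nat.antidiagonalTuple m (d - a), g (k.insertNth a e) := by
  rw [sum_sigma']
  refine sum_nbij' (fun e => ⟨e k, k.removeNth e⟩) (fun x => k.insertNth x.1 x.2) ?_ ?_
    (fun e _ => Fin.insertNth_self_removeNth k e) (fun x _ => ?_)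
    (fun e _ => by rw [Fin.insertNth_self_removeNth])
  · intro e he
    have hsum := Fin.sum_univ_succAbove e k
    simp only [mem_sigma, mem_range, Nat.mem_antidiagonalTuple, Fin.removeNth] at he ⊢
    omega
  · rintro ⟨a, e⟩ he
    have hsum := Fin.sum_univ_succAbove (k.insertNth a e) k
    simp only [mem_sigma, mem_range, Nat.mem_antidiagonalTuple, Fin.insertNth_apply_same,
      Fin.insertNth_apply_succAbove] at he hsum ⊢
    omega
  · simp

lemma sum_prod_filter_strictMajority_eq (m d : ℕ) (η ρ : ℝ) (k : Fin (m + 1)) :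
    ∑ f : Fin d → Fin (m + 1) with ∀ j, j ≠ k → fiberCard f j < fiberCard f k,
        ∏ i, (if f i = k then η else ρ)
      = d ! * ∑ a ∈ range (d + 1), η ^ a / a ! * T ρ a m (d - a) := by
  rw [sum_prod_filter_fiberCard_eq (fun j => if j = k then η else ρ)
      (fun e => ∀ j, j ≠ k → e j < e k), piAntidiag_univ_fin_eq_antidiagonalTuple, sum_filter,
    sum_antidiagonalTuple_eq_sum_insertNth k]
  refine congrArg _ (sum_congr rfl fun a _ => ?_)
  rw [T, mul_sum, sum_filter]
  refine sum_congr rfl fun e _ => ?_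
  have hmajority :
      (∀ j, j ≠ k → Fin.insertNth (α := fun _ => ℕ) k a e j < a) ↔ ∀ l, e l < a := by
    simp [Fin.forall_iff_succAbove k, Fin.succAbove_ne]
  rw [Fin.prod_univ_succAbove _ k]
  simp [hmajority, Fin.succAbove_ne]

lemma measure_preimage_eq_sum_prod {Ω ι β : Type*} [MeasurableSpace Ω] {P : Measure Ω}
    [Fintype ι] [MeasurableSpace β] [MeasurableSingletonClass β] {X : ι → Ω → β}
    (hmeas : ∀ i, Measurable (X i)) (hindep : iIndepFun X P) (S : Finset (ι → β)) :
    P ((fun ω i => X i ω) ⁻¹' S) = ∑ f ∈ S, ∏ i, P (X i ⁻¹' {f i}) := by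
  have hfiber (f : ι → β) : (fun ω i => X i ω) ⁻¹' {f} = ⋂ i ∈ univ, X i ⁻¹' {f i} := by
    ext ω
    simp [funext_iff]
  rw [← sum_measure_preimage_singleton S fun f _ => hfiber f ▸
    univ.measurableSet_biInter fun i _ => hmeas i (measurableSet_singleton (f i))]
  refine sum_congr rfl fun f _ => ?_
  rw [hfiber, hindep.measure_inter_preimage_eq_mul _ fun i _ => measurableSet_singleton (f i)]

theorem strict_majority_probability_eq_dp_sum_general
    (K d : ℕ)
    (η : ℝ) (hη0 : 0 ≤ η) (hη1 : η ≤ 1)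
    (ρ : ℝ) (hρ : ρ = (1 - η) / ((K : ℝ) - 1))
    (k : Fin K)
    {Ω : Type} [MeasurableSpace Ω] (P : Measure Ω)
    (X : Fin d → Ω → Fin K)
    (hmeas : ∀ i, Measurable (X i))
    (hindep : iIndepFun X P)
    (hdist : ∀ (i : Fin d) (j : Fin K),
      P {ω | X i ω = j} = ENNReal.ofReal (if j = k then η else ρ))
    (c : Fin K → Ω → ℕ)
    (hc : ∀ j ω, c j ω = (univ.filter (fun i => X i ω = j)).card) :
    P {ω | ∀ j, j ≠ k → c j ω < c k ω}
      = ENNReal.ofReal ((d.factorial : ℝ)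
          * ∑ a ∈ Finset.range (d + 1),
              η ^ a / (a.factorial : ℝ) * T ρ a (K - 1) (d - a)) := by
  have hρ0 : 0 ≤ ρ := hρ ▸ div_nonneg (by linarith) (sub_nonneg.2 (Nat.one_le_cast.2 k.pos))
  have hweight (j : Fin K) : 0 ≤ if j = k then η else ρ := by split_ifs <;> assumption
  have hdist' (i : Fin d) (j : Fin K) : P (X i ⁻¹' {j}) = ENNReal.ofReal _ := hdist i j
  obtain ⟨m, rfl⟩ : ∃ m, K = m + 1 := ⟨K - 1, by have := k.pos; omega⟩
  have hevent : {ω | ∀ j, j ≠ k → c j ω < c k ω} = (fun ω i => X i ω) ⁻¹'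
      ↑({f | ∀ j, j ≠ k → fiberCard f j < fiberCard f k} : Finset (Fin d → Fin (m + 1))) := by
    ext ω
    rw [Set.mem_preimage, mem_coe, mem_filter]
    simp [hc, fiberCard]
  rw [hevent, measure_preimage_eq_sum_prod hmeas hindep, ← sum_prod_filter_strictMajority_eq,
    ENNReal.ofReal_sum_of_nonneg fun f _ => prod_nonneg fun i _ => hweight (f i)]
  simp only [hdist']
  exact sum_congr rfl fun f _ => (ENNReal.ofReal_prod_of_nonneg fun i _ => hweight (f i)).symm

/-- The strict-majority probability equals `d! · ∑_{a=0}^{d} (η^a / a!) · T(K-1, d-a, a)`,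
grouping the constrained multinomial sum by the value `a` of the correct-cluster count. -/
theorem strict_majority_probability_eq_dp_sum
    (K d : ℕ) (hK : 2 ≤ K) (hd : 1 ≤ d)
    (η : ℝ) (hη0 : 0 ≤ η) (hη1 : η ≤ 1)
    (ρ : ℝ) (hρ : ρ = (1 - η) / ((K : ℝ) - 1))
    (k : Fin K)
    {Ω : Type} [MeasurableSpace Ω] (P : Measure Ω) [IsProbabilityMeasure P]
    (X : Fin d → Ω → Fin K)
    (hmeas : ∀ i, Measurable (X i))
    (hindep : iIndepFun X P)
    (hdist : ∀ (i : Fin d) (j : Fin K),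
      P {ω | X i ω = j} = ENNReal.ofReal (if j = k then η else ρ))
    (c : Fin K → Ω → ℕ)
    (hc : ∀ j ω, c j ω = (univ.filter (fun i => X i ω = j)).card) :
    P {ω | ∀ j, j ≠ k → c j ω < c k ω}
      = ENNReal.ofReal ((d.factorial : ℝ)
          * ∑ a ∈ Finset.range (d + 1),
              η ^ a / (a.factorial : ℝ) * T ρ a (K - 1) (d - a)) :=
  strict_majority_probability_eq_dp_sum_general K d η hη0 hη1 ρ hρ k P X hmeas hindep hdist c hc
end
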